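/- arXiv:2010.11045 — 2 statements merged into one kernel-verified Lean document; each statement's English description precedes it below -/
import Mathlib

section
/- Fix a real-valued Schwartz function V on ℝ³, ε₀ > 0 and μ ∈ ℝ. Let w : [0,∞) → 𝒮(ℝ³;ℂ) be a C¹ curve in Schwartz space satisfying pointwise the equation i∂ₜw − Δw + i⟨t⟩^{−2ε₀}V(x)²w = μ|w|^{4/3}w on [0,∞). Then the damping term satisfies the global spacetime bound ‖ t ↦ ⟨t⟩^{−2ε₀}V²w(t) ‖_{L²_t L^{6/5}_x([0,∞))} ≤ 2^{−1/2} ‖V‖_{L³(ℝ³)} ‖w(0)‖_{L²(ℝ³)}. -/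
open MeasureTheory Real Set
open scoped ENNReal NNReal

noncomputable section

abbrev R3 : Type := EuclideanSpace ℝ (Fin 3)

/-- Japanese bracket `⟨t⟩ = (1+t²)^{1/2}`. -/
def jb (t : ℝ) : ℝ := Real.sqrt (1 + t ^ 2)

/-- Laplacian on `ℝ³`, as the sum of second partial derivatives along coordinates. -/
def lap (f : R3 → ℂ) (x : R3) : ℂ :=
  ∑ i : Fin 3,
    fderiv ℝ (fun y => fderiv ℝ f y (EuclideanSpace.single i 1)) x (EuclideanSpace.single i 1)

/-- Mixed norm `‖u‖_{L^q_t L^r_x(I×ℝ³)}`. -/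
def mixedNorm (q r : ℝ≥0∞) (I : Set ℝ) (u : ℝ → R3 → ℂ) : ℝ≥0∞ :=
  if q = ∞ then essSup (fun t => eLpNorm (u t) r volume) (volume.restrict I)
  else (∫⁻ t in I, (eLpNorm (u t) r volume) ^ q.toReal) ^ (1 / q.toReal)

/-- 3D-admissible Strichartz pair. -/
def IsAdmissible (q r : ℝ≥0∞) : Prop := 2 ≤ q ∧ 2 ≤ r ∧ 2 / q + 3 / r = 3 / 2

/-- Hölder conjugate exponent in `ℝ≥0∞`. -/
def hconj (p : ℝ≥0∞) : ℝ≥0∞ :=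
  if p = ∞ then 1 else if p = 1 then ∞ else ENNReal.ofReal (p.toReal / (p.toReal - 1))

/-- A C¹ curve in Schwartz space on a time set `I`, with derivative curve `w'`. -/
structure IsC1Curve (I : Set ℝ) (w w' : ℝ → SchwartzMap R3 ℂ) : Prop where
  deriv : ∀ t ∈ I, ∀ x : R3, HasDerivAt (fun s => w s x) (w' t x) t
  cont : ContinuousOn w' I

/-- Left-hand side `i ∂ₜ w − Δ w + i ⟨t⟩^{−2ε₀} V(x)² w` of the damped Schrödinger equation. -/
def DampedLHS (V : SchwartzMap R3 ℝ) (ε₀ : ℝ) (w w' : ℝ → SchwartzMap R3 ℂ)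
    (t : ℝ) (x : R3) : ℂ :=
  Complex.I * w' t x - lap (⇑(w t)) x
    + Complex.I * ((jb t ^ (-(2 * ε₀)) : ℝ) : ℂ) * ((V x : ℝ) : ℂ) ^ 2 * w t x

/-- The mass-critical nonlinearity `|z|^{4/3} z`. -/
def nl (z : ℂ) : ℂ := ((‖z‖ ^ ((4 : ℝ) / 3) : ℝ) : ℂ) * z

/-- Dual Strichartz norm `‖F‖_{N(I)}`. -/
def dualNorm (I : Set ℝ) (F : ℝ → R3 → ℂ) : ℝ≥0∞ :=
  ⨅ (q : ℝ≥0∞) (r : ℝ≥0∞) (_ : IsAdmissible q r), mixedNorm (hconj q) (hconj r) I F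

/-!
Multiplying the equation by `w̄` and taking real parts, the nonlinearity drops out pointwise (its
coefficient `μ |w|^{4/3}` is real) and the Laplacian drops out after integration (`∫ w̄ Δw` is real
by integration by parts). So the mass `‖w(t)‖₂²` has derivative `-2 ⟨t⟩^{-2ε₀} ∫ V² |w(t)|²`, and
integrating in time gives `∫₀^∞ ⟨t⟩^{-2ε₀} ∫ V² |w|² ≤ ‖w(0)‖₂² / 2`. Hölder with
`5/6 = 1/3 + 1/2`, together with `⟨t⟩^{-4ε₀} ≤ ⟨t⟩^{-2ε₀}`, bounds
`‖⟨t⟩^{-2ε₀} V² w(t)‖_{6/5}²` by `‖V‖₃² ⟨t⟩^{-2ε₀} ∫ V² |w(t)|²`, which is integrable in time.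
-/

open scoped SchwartzMap LineDeriv Laplacian ComplexConjugate InnerProductSpace

lemma re_conj_mul_eq_of_schrodinger {z z' L : ℂ} {a c : ℝ}
    (h : Complex.I * z' - L + Complex.I * a * z = c * z) :
    (conj z * z').re = (conj z * L).im - a * ‖z‖ ^ 2 := by
  have hz' : z' = -Complex.I * (c * z) - Complex.I * L - a * z := by
    linear_combination (-Complex.I) * h + (z' + a * z) * Complex.I_sq
  subst hz'
  simp only [Complex.mul_re, Complex.mul_im, Complex.sub_re, Complex.sub_im, Complex.conj_re,
    Complex.conj_im, Complex.neg_re, Complex.neg_im, Complex.I_re, Complex.I_im,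
    Complex.ofReal_re, Complex.ofReal_im, Complex.sq_norm, Complex.normSq_apply]
  ring

def conjMulCLM : ℂ →L[ℝ] ℂ →L[ℝ] ℂ :=
  (ContinuousLinearMap.mul ℝ ℂ).comp Complex.conjCLE.toContinuousLinearMap

@[simp]
lemma conjMulCLM_apply (z z' : ℂ) : conjMulCLM z z' = conj z * z' := rfl

namespace SchwartzMap

variable {E : Type*} [NormedAddCommGroup E]

theorem im_integral_conj_mul_laplacian [InnerProductSpace ℝ E] [FiniteDimensional ℝ E]
    [MeasurableSpace E] [BorelSpace E] (μ : Measure E) [μ.IsAddHaarMeasure] (f : 𝓢(E, ℂ)) :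
    (∫ x, conj (f x) * Δ f x ∂μ).im = 0 := by
  have h := integral_bilinear_laplacian_right_eq_left (μ := μ) f f conjMulCLM
  simp only [conjMulCLM_apply] at h
  rw [← Complex.conj_eq_iff_im, ← integral_conj]
  simpa [mul_comm] using h.symm

variable [NormedSpace ℝ E]

theorem norm_le_seminorm_add_mul_rpow {F : Type*} [NormedAddCommGroup F] [NormedSpace ℝ F]
    (f : 𝓢(E, F)) (k : ℕ) (x : E) :
    ‖f x‖ ≤ 2 ^ k * (SchwartzMap.seminorm ℝ 0 0 f + SchwartzMap.seminorm ℝ k 0 f)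
      * (1 + ‖x‖) ^ (-(k : ℝ)) := by
  simpa using pow_mul_le_of_le_of_pow_mul_le (k := 0) (norm_nonneg x) (norm_nonneg _)
    (f.norm_le_seminorm ℝ x) (by simpa using f.norm_pow_mul_le_seminorm ℝ k x)

lemma abs_sq_le_seminorm (V : 𝓢(E, ℝ)) (x : E) : |V x ^ 2| ≤ SchwartzMap.seminorm ℝ 0 0 V ^ 2 := by
  rw [abs_pow]
  exact pow_le_pow_left₀ (abs_nonneg _) (V.norm_le_seminorm ℝ x) 2

lemma integrable_sq_mul_sq_norm [MeasurableSpace E] [BorelSpace E] {μ : Measure E}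
    [μ.HasTemperateGrowth] (V : 𝓢(E, ℝ)) (f : 𝓢(E, ℂ)) :
    Integrable (fun x => V x ^ 2 * ‖f x‖ ^ 2) μ :=
  ((f.memLp 2 μ).integrable_norm_pow two_ne_zero).bdd_mul
    (V.continuous.pow 2).aestronglyMeasurable (ae_of_all _ (V.abs_sq_le_seminorm ·))

end SchwartzMap

theorem IsCompact.exists_schwartz_decay_bound {E F : Type*} [NormedAddCommGroup E]
    [NormedSpace ℝ E] [NormedAddCommGroup F] [NormedSpace ℝ F] {K : Set 𝓢(E, F)}
    (hK : IsCompact K) (k : ℕ) :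
    ∃ C, 0 ≤ C ∧ ∀ f ∈ K, ∀ x, ‖f x‖ ≤ C * (1 + ‖x‖) ^ (-(k : ℝ)) := by
  have hcont : Continuous fun f : 𝓢(E, F) =>
      SchwartzMap.seminorm ℝ 0 0 f + SchwartzMap.seminorm ℝ k 0 f :=
    ((schwartz_withSeminorms ℝ E F).continuous_seminorm (0, 0)).add
      ((schwartz_withSeminorms ℝ E F).continuous_seminorm (k, 0))
  obtain ⟨C, hC⟩ := hK.exists_bound_of_continuousOn hcont.continuousOn
  refine ⟨2 ^ k * max C 0, by positivity, fun f hf x => ?_⟩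
  refine (f.norm_le_seminorm_add_mul_rpow k x).trans ?_
  gcongr
  exact (le_abs_self _).trans ((hC f hf).trans (le_max_left _ _))

theorem setLIntegral_Ici_ofReal_le {f : ℝ → ℝ} {a M : ℝ} (hf0 : ∀ t, 0 ≤ f t)
    (hf : ∀ T, a ≤ T → IntervalIntegrable f volume a T)
    (hM : ∀ T, a ≤ T → ∫ t in a..T, f t ≤ M) :
    ∫⁻ t in Ici a, ENNReal.ofReal (f t) ≤ ENNReal.ofReal M := by
  have hIoi : Ioi a = ⋃ n : ℕ, Ioc a (a + n) := by
    ext t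
    simp only [mem_Ioi, mem_iUnion, mem_Ioc]
    exact ⟨fun ht => (exists_nat_ge (t - a)).imp fun n hn => ⟨ht, by linarith⟩,
      fun ⟨_, ht, _⟩ => ht⟩
  have hmono : Monotone fun n : ℕ => Ioc a (a + n) := fun m n hmn =>
    Ioc_subset_Ioc_right (by simpa using hmn)
  rw [← setLIntegral_congr Ioi_ae_eq_Ici, hIoi,
    setLIntegral_iUnion_of_directed _ hmono.directed_le]
  refine iSup_le fun n => ?_
  have hn : a ≤ a + n := le_add_of_nonneg_right n.cast_nonneg
  rw [← ofReal_integral_eq_lintegral_ofReal (hf _ hn).1 (ae_of_all _ hf0),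
    ← intervalIntegral.integral_of_le hn]
  exact ENNReal.ofReal_le_ofReal (hM _ hn)

section Lp

variable {α : Type*} [MeasurableSpace α] {μ : Measure α}

lemma eLpNorm_two_sq_eq_lintegral {E : Type*} [NormedAddCommGroup E] (g : α → E) :
    eLpNorm g 2 μ ^ 2 = ∫⁻ x, ‖g x‖ₑ ^ 2 ∂μ := by
  simpa [ENNReal.rpow_two] using eLpNorm_nnreal_pow_eq_lintegral (f := g) (μ := μ) (p := 2)
    two_ne_zero

lemma eLpNorm_two_sq_eq_ofReal_integral {E : Type*} [NormedAddCommGroup E] {g : α → E}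
    (hg : Integrable (fun x => ‖g x‖ ^ 2) μ) :
    eLpNorm g 2 μ ^ 2 = ENNReal.ofReal (∫ x, ‖g x‖ ^ 2 ∂μ) := by
  rw [eLpNorm_two_sq_eq_lintegral, ofReal_integral_eq_lintegral_ofReal hg
    (ae_of_all _ fun x => by positivity)]
  simp_rw [ENNReal.ofReal_pow (norm_nonneg _), ofReal_norm]

instance : ENNReal.HolderTriple 3 2 (6 / 5) where
  inv_add_inv_eq_inv := by
    rw [ENNReal.inv_div (by norm_num) (by norm_num), ← ENNReal.toReal_eq_toReal_iff' (by simp)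
      (ENNReal.div_ne_top (by simp) (by simp)), ENNReal.toReal_add (by simp) (by simp)]
    simp [ENNReal.toReal_div]
    norm_num

theorem sq_eLpNorm_six_fifths_le {φ : α → ℝ} {f : α → ℂ} (hφ : AEStronglyMeasurable φ μ)
    (hf : AEStronglyMeasurable f μ) (hint : Integrable (fun x => φ x ^ 2 * ‖f x‖ ^ 2) μ)
    {a : ℝ} (ha0 : 0 ≤ a) (ha1 : a ≤ 1) :
    eLpNorm (fun x => (a : ℂ) * (φ x : ℂ) ^ 2 * f x) (6 / 5) μ ^ 2
      ≤ eLpNorm φ 3 μ ^ 2 * ENNReal.ofReal (a * ∫ x, φ x ^ 2 * ‖f x‖ ^ 2 ∂μ) := by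
  set g : α → ℂ := fun x => (a : ℂ) * φ x * f x
  have hHolder : eLpNorm (fun x => (a : ℂ) * (φ x : ℂ) ^ 2 * f x) (6 / 5) μ
      ≤ eLpNorm φ 3 μ * eLpNorm g 2 μ := by
    refine le_of_eq_of_le ?_ (eLpNorm_smul_le_mul_eLpNorm (p := 3) (q := 2) (r := 6 / 5)
      ((Complex.continuous_ofReal.comp_aestronglyMeasurable hφ).const_mul _ |>.mul hf) hφ)
    congr 1
    ext x
    simp only [Pi.smul_apply', Pi.mul_apply, Complex.real_smul]
    ring
  have hL2 : eLpNorm g 2 μ ^ 2 ≤ ENNReal.ofReal (a * ∫ x, φ x ^ 2 * ‖f x‖ ^ 2 ∂μ) := by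
    rw [eLpNorm_two_sq_eq_lintegral, ← integral_const_mul,
      ofReal_integral_eq_lintegral_ofReal (hint.const_mul a) (ae_of_all _ fun x => by positivity)]
    refine lintegral_mono fun x => ?_
    rw [← ofReal_norm, ← ENNReal.ofReal_pow (norm_nonneg _)]
    refine ENNReal.ofReal_le_ofReal ?_
    simp only [g, norm_mul, Complex.norm_real, Real.norm_eq_abs, mul_pow, sq_abs]
    rw [mul_assoc]
    gcongr
    nlinarith
  calc eLpNorm (fun x => (a : ℂ) * (φ x : ℂ) ^ 2 * f x) (6 / 5) μ ^ 2
      ≤ (eLpNorm φ 3 μ * eLpNorm g 2 μ) ^ 2 := by gcongr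
    _ ≤ eLpNorm φ 3 μ ^ 2 * ENNReal.ofReal (a * ∫ x, φ x ^ 2 * ‖f x‖ ^ 2 ∂μ) := by
      rw [mul_pow]
      gcongr

end Lp

theorem mixedNorm_two_le {r : ℝ≥0∞} {I : Set ℝ} {u : ℝ → R3 → ℂ} {g : ℝ → ℝ≥0∞}
    {A B : ℝ≥0∞} (hA : A ≠ ⊤) (hI : MeasurableSet I)
    (hu : ∀ t ∈ I, eLpNorm (u t) r volume ^ 2 ≤ A ^ 2 * g t) (hg : ∫⁻ t in I, g t ≤ B ^ 2) :
    mixedNorm 2 r I u ≤ A * B := by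
  rw [mixedNorm, if_neg ENNReal.ofNat_ne_top, ENNReal.toReal_ofNat]
  calc (∫⁻ t in I, eLpNorm (u t) r volume ^ (2 : ℝ)) ^ (1 / 2 : ℝ)
      ≤ ((A * B) ^ (2 : ℝ)) ^ (1 / 2 : ℝ) := by
        gcongr
        calc ∫⁻ t in I, eLpNorm (u t) r volume ^ (2 : ℝ)
            ≤ ∫⁻ t in I, A ^ 2 * g t :=
              setLIntegral_mono' hI fun t ht => by simpa only [ENNReal.rpow_two] using hu t ht
          _ = A ^ 2 * ∫⁻ t in I, g t := lintegral_const_mul' _ _ (ENNReal.pow_ne_top hA)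
          _ ≤ (A * B) ^ (2 : ℝ) := by
            rw [ENNReal.rpow_two, mul_pow]
            gcongr
    _ = A * B := by
      rw [← ENNReal.rpow_mul]
      norm_num

lemma one_le_jb (t : ℝ) : 1 ≤ jb t :=
  Real.one_le_sqrt.2 (le_add_of_nonneg_right (sq_nonneg t))

lemma continuous_jb_rpow (p : ℝ) : Continuous fun t => jb t ^ p :=
  (continuous_const.add (continuous_pow 2)).sqrt.rpow_const
    fun t => Or.inl (zero_lt_one.trans_le (one_le_jb t)).ne'

lemma lap_eq_laplacian (f : 𝓢(R3, ℂ)) : lap f = Δ f := by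
  ext x
  rw [SchwartzMap.laplacian_eq_sum (EuclideanSpace.basisFun (Fin 3) ℝ), lap]
  simp only [EuclideanSpace.basisFun_apply, sum_apply, SchwartzMap.lineDerivOp_apply_eq_fderiv]
  rfl

lemma sq_one_add_norm_rpow_neg_two (x : R3) :
    ((1 + ‖x‖) ^ (-((2 : ℕ) : ℝ))) ^ 2 = (1 + ‖x‖) ^ (-4 : ℝ) := by
  rw [← Real.rpow_natCast, ← Real.rpow_mul (by positivity)]
  norm_num

lemma integrable_one_add_norm_rpow_neg_four :
    Integrable (fun x : R3 => (1 + ‖x‖) ^ (-4 : ℝ)) :=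
  integrable_one_add_norm (by simp; norm_num)

namespace IsC1Curve

variable {w w' : ℝ → 𝓢(R3, ℂ)}

/- `w'` is bounded in Schwartz space on compact time intervals by continuity, and `w` inherits
the bound through the mean value theorem; this domination justifies differentiating the mass
under the integral sign. -/
theorem exists_decay_bound (hw : IsC1Curve (Ici 0) w w') (k : ℕ) (T : ℝ) :
    ∃ C, ∀ s ∈ Icc 0 T, ∀ x,
      ‖w s x‖ ≤ C * (1 + ‖x‖) ^ (-(k : ℝ)) ∧ ‖w' s x‖ ≤ C * (1 + ‖x‖) ^ (-(k : ℝ)) := by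
  obtain ⟨C₁, hC₁0, hC₁⟩ := (isCompact_Icc.image_of_continuousOn
    (hw.cont.mono Icc_subset_Ici_self)).exists_schwartz_decay_bound k
  obtain ⟨C₀, hC₀0, hC₀⟩ := (isCompact_singleton (x := w 0)).exists_schwartz_decay_bound k
  refine ⟨C₀ + C₁ * (T + 1), fun s hs x => ?_⟩
  set ρ := (1 + ‖x‖) ^ (-(k : ℝ))
  have hρ : 0 ≤ ρ := by positivity
  have hw' : ∀ τ ∈ Icc 0 T, ‖w' τ x‖ ≤ C₁ * ρ := fun τ hτ => hC₁ _ (mem_image_of_mem _ hτ) x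
  have hmvt : ‖w s x - w 0 x‖ ≤ C₁ * ρ * ‖s - 0‖ :=
    (convex_Icc 0 T).norm_image_sub_le_of_norm_hasDerivWithin_le
      (fun τ hτ => (hw.deriv τ hτ.1 x).hasDerivWithinAt) hw'
      (left_mem_Icc.2 (hs.1.trans hs.2)) hs
  rw [sub_zero, Real.norm_of_nonneg hs.1] at hmvt
  have hC₁ρ : 0 ≤ C₁ * ρ := mul_nonneg hC₁0 hρ
  constructor
  · calc ‖w s x‖ ≤ ‖w 0 x‖ + ‖w s x - w 0 x‖ := norm_le_norm_add_norm_sub' _ _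
      _ ≤ C₀ * ρ + C₁ * ρ * T := by
        gcongr
        · exact hC₀ _ rfl x
        · exact hmvt.trans (mul_le_mul_of_nonneg_left hs.2 hC₁ρ)
      _ ≤ (C₀ + C₁ * (T + 1)) * ρ := by nlinarith
  · calc ‖w' s x‖ ≤ C₁ * ρ := hw' s hs
      _ ≤ (C₀ + C₁ * (T + 1)) * ρ := by nlinarith [mul_nonneg hC₀0 hρ, hs.1.trans hs.2]

theorem continuousOn_integral_mul_sq_norm (hw : IsC1Curve (Ici 0) w w') {φ : R3 → ℝ}
    (hφ : Continuous φ) {B : ℝ} (hB : ∀ x, |φ x| ≤ B) (T : ℝ) :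
    ContinuousOn (fun t => ∫ x, φ x * ‖w t x‖ ^ 2) (Icc 0 T) := by
  obtain ⟨C, hC⟩ := hw.exists_decay_bound 2 T
  refine continuousOn_of_dominated (bound := fun x => B * C ^ 2 * (1 + ‖x‖) ^ (-4 : ℝ))
    (fun t _ => (hφ.mul ((w t).continuous.norm.pow 2)).aestronglyMeasurable)
    (fun t ht => ae_of_all _ fun x => ?_)
    (integrable_one_add_norm_rpow_neg_four.const_mul _)
    (ae_of_all _ fun x => continuousOn_const.mul (ContinuousOn.pow (ContinuousOn.norm
      fun t ht => (hw.deriv t ht.1 x).continuousAt.continuousWithinAt) 2))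
  rw [norm_mul, Real.norm_eq_abs, norm_pow, norm_norm, mul_assoc,
    ← sq_one_add_norm_rpow_neg_two, ← mul_pow]
  gcongr
  · exact (abs_nonneg _).trans (hB x)
  · exact hB x
  · exact (hC t ht x).1

theorem hasDerivAt_integral_sq_norm (hw : IsC1Curve (Ici 0) w w') {t : ℝ} (ht : 0 < t) :
    HasDerivAt (fun s => ∫ x, ‖w s x‖ ^ 2) (∫ x, 2 * ⟪w t x, w' t x⟫_ℝ) t := by
  obtain ⟨C, hC⟩ := hw.exists_decay_bound 2 (t + 1)
  have hball : Metric.ball t (min t 1) ⊆ Icc 0 (t + 1) := by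
    rw [Real.ball_eq_Ioo]
    exact Ioo_subset_Icc_self.trans
      (Icc_subset_Icc (by linarith [min_le_left t 1]) (by linarith [min_le_right t 1]))
  refine (hasDerivAt_integral_of_dominated_loc_of_deriv_le
    (bound := fun x => 2 * C ^ 2 * (1 + ‖x‖) ^ (-4 : ℝ))
    (Metric.ball_mem_nhds t (lt_min ht one_pos))
    (Filter.Eventually.of_forall fun s => ((w s).continuous.norm.pow 2).aestronglyMeasurable)
    (((w t).memLp 2).integrable_norm_pow two_ne_zero)
    ((continuous_const.mul ((w t).continuous.inner (w' t).continuous)).aestronglyMeasurable)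
    (ae_of_all _ fun x s hs => ?_)
    (integrable_one_add_norm_rpow_neg_four.const_mul _)
    (ae_of_all _ fun x s hs => (hw.deriv s (hball hs).1 x).norm_sq)).2
  obtain ⟨hws, hw's⟩ := hC s (hball hs) x
  rw [norm_mul, Real.norm_two, mul_assoc, ← sq_one_add_norm_rpow_neg_two, ← mul_pow, sq]
  gcongr
  exact (norm_inner_le_norm _ _).trans (mul_le_mul hws hw's (norm_nonneg _)
    ((norm_nonneg _).trans hws))

end IsC1Curve

section MassLaw

variable {V : 𝓢(R3, ℝ)} {ε₀ μ : ℝ} {w w' : ℝ → 𝓢(R3, ℂ)}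

lemma inner_deriv_eq_of_dampedLHS {t : ℝ} {x : R3}
    (h : DampedLHS V ε₀ w w' t x = μ * nl (w t x)) :
    ⟪w t x, w' t x⟫_ℝ
      = (conj (w t x) * Δ (w t) x).im - jb t ^ (-(2 * ε₀)) * (V x ^ 2 * ‖w t x‖ ^ 2) := by
  rw [Complex.inner, mul_comm, ← mul_assoc]
  refine re_conj_mul_eq_of_schrodinger (c := μ * ‖w t x‖ ^ ((4 : ℝ) / 3)) ?_
  rw [DampedLHS, nl, lap_eq_laplacian] at h
  push_cast
  linear_combination h

lemma integral_inner_deriv_eq_of_dampedLHS {t : ℝ}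
    (h : ∀ x, DampedLHS V ε₀ w w' t x = μ * nl (w t x)) :
    ∫ x, 2 * ⟪w t x, w' t x⟫_ℝ
      = -2 * (jb t ^ (-(2 * ε₀)) * ∫ x, V x ^ 2 * ‖w t x‖ ^ 2) := by
  have hΔ : Integrable fun x => conj (w t x) * Δ (w t) x :=
    (SchwartzMap.pairing conjMulCLM (w t) (Δ (w t))).integrable
  have hΔim : ∫ x, (conj (w t x) * Δ (w t) x).im = (∫ x, conj (w t x) * Δ (w t) x).im :=
    integral_im hΔ
  have hΔim' : Integrable fun x => (conj (w t x) * Δ (w t) x).im := hΔ.im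
  simp_rw [inner_deriv_eq_of_dampedLHS (h _)]
  rw [integral_const_mul, integral_sub hΔim' ((V.integrable_sq_mul_sq_norm (w t)).const_mul _),
    hΔim, (w t).im_integral_conj_mul_laplacian volume, integral_const_mul]
  ring

lemma continuousOn_damping (hw : IsC1Curve (Ici 0) w w') (T : ℝ) :
    ContinuousOn (fun t => jb t ^ (-(2 * ε₀)) * ∫ x, V x ^ 2 * ‖w t x‖ ^ 2) (Icc 0 T) :=
  (continuous_jb_rpow _).continuousOn.mul
    (hw.continuousOn_integral_mul_sq_norm (V.continuous.pow 2) V.abs_sq_le_seminorm T)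

theorem intervalIntegral_damping_le (hw : IsC1Curve (Ici 0) w w')
    (hPDE : ∀ t ∈ Ici (0 : ℝ), ∀ x, DampedLHS V ε₀ w w' t x = μ * nl (w t x))
    {T : ℝ} (hT : 0 ≤ T) :
    ∫ t in 0..T, jb t ^ (-(2 * ε₀)) * ∫ x, V x ^ 2 * ‖w t x‖ ^ 2
      ≤ (∫ x, ‖w 0 x‖ ^ 2) / 2 := by
  have hmass : ContinuousOn (fun t => ∫ x, ‖w t x‖ ^ 2) (Icc 0 T) := by
    simpa using hw.continuousOn_integral_mul_sq_norm continuous_const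
      (fun _ => (abs_one (α := ℝ)).le) T
  have hFTC := intervalIntegral.integral_eq_sub_of_hasDerivAt_of_le hT hmass
    (f' := fun t => -2 * (jb t ^ (-(2 * ε₀)) * ∫ x, V x ^ 2 * ‖w t x‖ ^ 2))
    (fun t ht => by
      simpa only [integral_inner_deriv_eq_of_dampedLHS (hPDE t (le_of_lt ht.1))] using
        hw.hasDerivAt_integral_sq_norm ht.1)
    ((continuousOn_const.mul (continuousOn_damping hw T)).intervalIntegrable_of_Icc hT)
  rw [intervalIntegral.integral_const_mul] at hFTC
  have hmassT : 0 ≤ ∫ x, ‖w T x‖ ^ 2 := integral_nonneg fun x => sq_nonneg _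
  linarith

theorem lintegral_damping_le (hw : IsC1Curve (Ici 0) w w')
    (hPDE : ∀ t ∈ Ici (0 : ℝ), ∀ x, DampedLHS V ε₀ w w' t x = μ * nl (w t x)) :
    ∫⁻ t in Ici 0, ENNReal.ofReal (jb t ^ (-(2 * ε₀)) * ∫ x, V x ^ 2 * ‖w t x‖ ^ 2)
      ≤ ENNReal.ofReal ((∫ x, ‖w 0 x‖ ^ 2) / 2) :=
  setLIntegral_Ici_ofReal_le
    (fun t => mul_nonneg (Real.rpow_nonneg (Real.sqrt_nonneg _) _)
      (integral_nonneg fun x => by positivity))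
    (fun T hT => (continuousOn_damping hw T).intervalIntegrable_of_Icc hT)
    (fun T hT => intervalIntegral_damping_le hw hPDE hT)

end MassLaw

/-- global L²_t L^{6/5}_x bound on the damping term, from the proofs of
Lemmas 4.2 and 4.4 of the paper. -/
theorem statement8 (V : SchwartzMap R3 ℝ) (ε₀ μ : ℝ) (hε₀ : 0 < ε₀)
    (w w' : ℝ → SchwartzMap R3 ℂ)
    (hC1 : IsC1Curve (Ici 0) w w')
    (hPDE : ∀ t ∈ Ici (0 : ℝ), ∀ x : R3, DampedLHS V ε₀ w w' t x = (μ : ℂ) * nl (w t x)) :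
    mixedNorm 2 (6 / 5) (Ici 0)
        (fun t x => ((jb t ^ (-(2 * ε₀)) : ℝ) : ℂ) * ((V x : ℝ) : ℂ) ^ 2 * w t x)
      ≤ ENNReal.ofReal ((2 : ℝ) ^ (-(1 / 2) : ℝ))
          * eLpNorm (⇑V) 3 volume * eLpNorm (⇑(w 0)) 2 volume := by
  have hdamp (t : ℝ) : jb t ^ (-(2 * ε₀)) ≤ 1 :=
    Real.rpow_le_one_of_one_le_of_nonpos (one_le_jb t) (by linarith)
  have hmass : ENNReal.ofReal ((∫ x, ‖w 0 x‖ ^ 2) / 2)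
      = (ENNReal.ofReal ((2 : ℝ) ^ (-(1 / 2) : ℝ)) * eLpNorm (⇑(w 0)) 2 volume) ^ 2 := by
    have hc : ENNReal.ofReal ((2 : ℝ) ^ (-(1 / 2) : ℝ)) ^ 2 = ENNReal.ofReal 2⁻¹ := by
      rw [← ENNReal.ofReal_pow (by positivity), ← Real.rpow_natCast, ← Real.rpow_mul zero_le_two]
      norm_num
    rw [mul_pow, hc, eLpNorm_two_sq_eq_ofReal_integral (μ := volume)
        (((w 0).memLp 2).integrable_norm_pow two_ne_zero),
      ← ENNReal.ofReal_mul (by norm_num), div_eq_inv_mul]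
  rw [mul_comm (ENNReal.ofReal _), mul_assoc]
  refine mixedNorm_two_le (V.eLpNorm_lt_top 3 volume).ne measurableSet_Ici
    (fun t _ => sq_eLpNorm_six_fifths_le V.continuous.aestronglyMeasurable
      (w t).continuous.aestronglyMeasurable (V.integrable_sq_mul_sq_norm (w t))
      (Real.rpow_nonneg (Real.sqrt_nonneg _) _) (hdamp t)) ?_
  rw [← hmass]
  exact lintegral_damping_le hC1 hPDE
end
end

section
/- Let V be a real-valued Schwartz function on ℝ³, let α ∈ [2,∞) and β ∈ (2,∞). There is a constant C, depending only on ‖V‖_{L^{3/2}(ℝ³)}, ‖V‖_{L^∞(ℝ³)} and ‖V‖_{L^{β/(β−2)}(ℝ³)}, such that the following holds. If u, u₁, u₂ are measurable functions on [0,∞) × ℝ³ with u = u₁ + u₂, A₁ := ‖u₁‖_{L²_t L⁶_x([0,∞))} < ∞, A₂ := ‖u₁‖_{L^∞_t L²_x([0,∞))} < ∞ and A₃ := ‖u₂‖_{L^α_t L^β_x([0,∞))} < ∞, then ‖ |V|^{1/2} u ‖_{L^α_t L²_x([0,∞))} ≤ C ( A₁^{2/α} A₂^{1−2/α} + A₃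 ); in particular |V|^{1/2}u ∈ L^α_t L²_x([0,∞)). -/
open MeasureTheory Real Set
open scoped ENNReal NNReal

noncomputable section

/-! Since `V` is Schwartz, the weight `W = |V|^{1/2}` lies in every `L^p(ℝ³)`. Hölder in `x` gives
`‖W u₁(t)‖₂ ≤ ‖W‖₃ ‖u₁(t)‖₆`, `‖W u₁(t)‖₂ ≤ ‖W‖_∞ ‖u₁(t)‖₂` and
`‖W u₂(t)‖₂ ≤ ‖W‖_{2β/(β-2)} ‖u₂(t)‖_β`. In `t`, the `L^α` norm is bounded by the `L²` norm to the
power `2/α` times the `L^∞` norm to the power `1 - 2/α`; this handles `u₁`, and Minkowski's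
inequality in `L^α_t L²_x` adds the two pieces. -/

theorem eLpNorm_le_eLpNorm_rpow_mul_eLpNorm_top_rpow {X ε : Type*} [MeasurableSpace X]
    {μ : Measure X} [TopologicalSpace ε] [ContinuousENorm ε] {f : X → ε}
    (hf : AEStronglyMeasurable f μ) {p q : ℝ≥0∞} (hp : p ≠ 0) (hpq : p ≤ q) (hq : q ≠ ∞) :
    eLpNorm f q μ ≤
      eLpNorm f p μ ^ (p.toReal / q.toReal) * eLpNorm f ∞ μ ^ (1 - p.toReal / q.toReal) := by
  have hp' : 0 < p.toReal := ENNReal.toReal_pos hp (ne_top_of_le_ne_top hq hpq)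
  have hpq' : p.toReal ≤ q.toReal := ENNReal.toReal_mono hq hpq
  have hq' : 0 < q.toReal := hp'.trans_le hpq'
  have hbound : ∀ᵐ x ∂μ, ‖f x‖ₑ ≤ eLpNorm f ∞ μ :=
    eLpNorm_exponent_top (f := f) ▸ ae_le_eLpNormEssSup
  set S := eLpNorm f ∞ μ
  have hsplit : ∫⁻ x, ‖f x‖ₑ ^ q.toReal ∂μ ≤
      (∫⁻ x, ‖f x‖ₑ ^ p.toReal ∂μ) * S ^ (q.toReal - p.toReal) := by
    rw [← lintegral_mul_const'' _ (hf.enorm.pow_const p.toReal)]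
    refine lintegral_mono_ae (hbound.mono fun x hx => ?_)
    calc ‖f x‖ₑ ^ q.toReal = ‖f x‖ₑ ^ p.toReal * ‖f x‖ₑ ^ (q.toReal - p.toReal) := by
          rw [← ENNReal.rpow_add_of_nonneg _ _ hp'.le (sub_nonneg.2 hpq'), add_sub_cancel]
      _ ≤ ‖f x‖ₑ ^ p.toReal * S ^ (q.toReal - p.toReal) := by gcongr
  rw [eLpNorm_eq_lintegral_rpow_enorm_toReal (hp.bot_lt.trans_le hpq).ne' hq,
    eLpNorm_eq_lintegral_rpow_enorm_toReal hp (ne_top_of_le_ne_top hq hpq)]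
  calc _ ≤ ((∫⁻ x, ‖f x‖ₑ ^ p.toReal ∂μ) * S ^ (q.toReal - p.toReal)) ^ (1 / q.toReal) := by
        gcongr
    _ = _ := by
        rw [ENNReal.mul_rpow_of_nonneg _ _ (by positivity), ← ENNReal.rpow_mul, ← ENNReal.rpow_mul]
        congr 2 <;> field_simp

theorem measurable_eLpNorm_slice {T X E : Type*} [MeasurableSpace T] [MeasurableSpace X]
    {μ : Measure X} [SFinite μ] [NormedAddCommGroup E] [MeasurableSpace E]
    [OpensMeasurableSpace E] {u : T → X → E} (hu : Measurable (Function.uncurry u))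
    {p : ℝ≥0∞} (hp : p ≠ ∞) :
    Measurable fun t => eLpNorm (u t) p μ := by
  rcases eq_or_ne p 0 with rfl | hp0
  · simp
  simp_rw [eLpNorm_eq_lintegral_rpow_enorm_toReal hp0 hp]
  exact ((hu.enorm.pow_const _).lintegral_prod_right' (ν := μ)).pow_const _

theorem SchwartzMap.memLp_norm_rpow {E F : Type*} [NormedAddCommGroup E] [NormedSpace ℝ E]
    [NormedAddCommGroup F] [NormedSpace ℝ F] [MeasurableSpace E] [BorelSpace E]
    [SecondCountableTopologyEither E F] (f : SchwartzMap E F) {s : ℝ} (hs : 0 < s) (p : ℝ≥0∞)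
    (μ : Measure E) [μ.HasTemperateGrowth] :
    MemLp (fun x => ‖f x‖ ^ s) p μ := by
  have h := (f.memLp (p * ENNReal.ofReal s) μ).norm_rpow_div (ENNReal.ofReal s)
  rwa [ENNReal.toReal_ofReal hs.le,
    ENNReal.mul_div_cancel_right (by simpa using hs) ENNReal.ofReal_ne_top] at h

theorem ENNReal.holderTriple_ofReal {p q r : ℝ} (hp : 0 < p) (hq : 0 < q) (hr : 0 < r)
    (h : p⁻¹ + q⁻¹ = r⁻¹) :
    ENNReal.HolderTriple (ENNReal.ofReal p) (ENNReal.ofReal q) (ENNReal.ofReal r) :=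
  ⟨by rw [← ENNReal.ofReal_inv_of_pos hp, ← ENNReal.ofReal_inv_of_pos hq,
    ← ENNReal.ofReal_inv_of_pos hr, ← ENNReal.ofReal_add (by positivity) (by positivity), h]⟩

section MixedNorm

variable {I : Set ℝ}

/- At `q = 0` the two sides differ: `mixedNorm 0 r I u = 1`, as `1 / (0 : ℝ≥0∞).toReal = 0`. -/
theorem mixedNorm_eq_eLpNorm {q : ℝ≥0∞} (hq : q ≠ 0) (r : ℝ≥0∞) (u : ℝ → R3 → ℂ) :
    mixedNorm q r I u = eLpNorm (fun t => eLpNorm (u t) r volume) q (volume.restrict I) := by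
  rcases eq_or_ne q ∞ with rfl | hq'
  · simp [mixedNorm, eLpNorm_exponent_top, eLpNormEssSup]
  · simp [mixedNorm, hq', eLpNorm_eq_lintegral_rpow_enorm_toReal hq hq']

theorem mixedNorm_add_le {q r : ℝ≥0∞} (hq : 1 ≤ q) (hr : 1 ≤ r) (hr' : r ≠ ∞)
    {u v : ℝ → R3 → ℂ} (hu : Measurable (Function.uncurry u))
    (hv : Measurable (Function.uncurry v)) :
    mixedNorm q r I (u + v) ≤ mixedNorm q r I u + mixedNorm q r I v := by
  simp only [mixedNorm_eq_eLpNorm (zero_lt_one.trans_le hq).ne']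
  calc _ ≤ eLpNorm ((fun t => eLpNorm (u t) r volume) + fun t => eLpNorm (v t) r volume) q
          (volume.restrict I) := by
        refine eLpNorm_mono_enorm fun t => ?_
        simp only [enorm_eq_self]
        exact eLpNorm_add_le (f := u t) (g := v t) hu.of_uncurry_left.aestronglyMeasurable
          hv.of_uncurry_left.aestronglyMeasurable hr
    _ ≤ _ := eLpNorm_add_le (measurable_eLpNorm_slice hu hr').aestronglyMeasurable
          (measurable_eLpNorm_slice hv hr').aestronglyMeasurable hq

theorem mixedNorm_le_rpow_mul_mixedNorm_top_rpow {p q r : ℝ≥0∞} (hp : p ≠ 0) (hpq : p ≤ q)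
    (hq : q ≠ ∞) (hr : r ≠ ∞) {u : ℝ → R3 → ℂ} (hu : Measurable (Function.uncurry u)) :
    mixedNorm q r I u ≤
      mixedNorm p r I u ^ (p.toReal / q.toReal) * mixedNorm ∞ r I u ^ (1 - p.toReal / q.toReal) := by
  simp only [mixedNorm_eq_eLpNorm hp, mixedNorm_eq_eLpNorm (hp.bot_lt.trans_le hpq).ne',
    mixedNorm_eq_eLpNorm ENNReal.top_ne_zero]
  exact eLpNorm_le_eLpNorm_rpow_mul_eLpNorm_top_rpow
    (measurable_eLpNorm_slice hu hr).aestronglyMeasurable hp hpq hq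

theorem mixedNorm_mul_le {p q r : ℝ≥0∞} [ENNReal.HolderTriple p q r] {s : ℝ≥0∞} (hs : s ≠ 0)
    {W : R3 → ℂ} (hW : MemLp W p volume) {u : ℝ → R3 → ℂ}
    (hu : ∀ t, AEStronglyMeasurable (u t) volume) :
    mixedNorm s r I (fun t x => W x * u t x) ≤ eLpNorm W p volume * mixedNorm s q I u := by
  simp only [mixedNorm_eq_eLpNorm hs]
  have hWfin : eLpNorm W p volume = (eLpNorm W p volume).toNNReal :=
    (ENNReal.coe_toNNReal hW.2.ne).symm
  rw [hWfin]
  refine eLpNorm_le_mul_eLpNorm_of_ae_le_mul' (.of_forall fun t => ?_) s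
  rw [enorm_eq_self, enorm_eq_self, ← hWfin]
  have hHolder := eLpNorm_smul_le_mul_eLpNorm (p := p) (q := q) (r := r) (hu t) hW.1
  exact hHolder

theorem mixedNorm_mul_le_interpolation {α : ℝ} (hα : 2 ≤ α) {W : R3 → ℂ} (hWm : Measurable W)
    (hW₃ : MemLp W 3 volume) (hW : MemLp W ∞ volume) {u : ℝ → R3 → ℂ}
    (hu : Measurable (Function.uncurry u)) :
    mixedNorm (ENNReal.ofReal α) 2 I (fun t x => W x * u t x) ≤
      eLpNorm W 3 volume ^ (2 / α) * eLpNorm W ∞ volume ^ (1 - 2 / α) *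
        (mixedNorm 2 6 I u ^ (2 / α) * mixedNorm ∞ 2 I u ^ (1 - 2 / α)) := by
  have hα₀ : 0 < α := by linarith
  have h1α : 0 ≤ 1 - 2 / α := by rw [sub_nonneg, div_le_one hα₀]; exact hα
  have : ENNReal.HolderTriple 3 6 2 := by
    simpa using ENNReal.holderTriple_ofReal (p := 3) (q := 6) (r := 2) (by norm_num) (by norm_num)
      (by norm_num) (by norm_num)
  have h2α : (2 : ℝ≥0∞) ≤ ENNReal.ofReal α := by simpa using ENNReal.ofReal_le_ofReal hα
  have hinterp := mixedNorm_le_rpow_mul_mixedNorm_top_rpow (I := I) two_ne_zero h2α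
    ENNReal.ofReal_ne_top (r := 2) ENNReal.ofNat_ne_top (u := fun t x => W x * u t x) (by fun_prop)
  rw [ENNReal.toReal_ofReal hα₀.le, ENNReal.toReal_ofNat] at hinterp
  calc _ ≤ _ := hinterp
    _ ≤ (eLpNorm W 3 volume * mixedNorm 2 6 I u) ^ (2 / α) *
        (eLpNorm W ∞ volume * mixedNorm ∞ 2 I u) ^ (1 - 2 / α) := by
        gcongr
        · exact mixedNorm_mul_le two_ne_zero hW₃ fun _ => hu.of_uncurry_left.aestronglyMeasurable
        · exact mixedNorm_mul_le ENNReal.top_ne_zero hW fun _ =>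
            hu.of_uncurry_left.aestronglyMeasurable
    _ = _ := by
        rw [ENNReal.mul_rpow_of_nonneg _ _ (by positivity), ENNReal.mul_rpow_of_nonneg _ _ h1α]
        ring

theorem mixedNorm_mul_add_le {α β : ℝ} (hα : 2 ≤ α) (hβ : 2 < β) {W : R3 → ℂ} (hWm : Measurable W)
    (hW₃ : MemLp W 3 volume) (hW : MemLp W ∞ volume)
    (hWβ : MemLp W (ENNReal.ofReal (2 * β / (β - 2))) volume) {u₁ u₂ : ℝ → R3 → ℂ}
    (hu₁ : Measurable (Function.uncurry u₁)) (hu₂ : Measurable (Function.uncurry u₂)) :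
    mixedNorm (ENNReal.ofReal α) 2 I (fun t x => W x * (u₁ + u₂) t x) ≤
      (eLpNorm W 3 volume ^ (2 / α) * eLpNorm W ∞ volume ^ (1 - 2 / α) +
          eLpNorm W (ENNReal.ofReal (2 * β / (β - 2))) volume) *
        (mixedNorm 2 6 I u₁ ^ (2 / α) * mixedNorm ∞ 2 I u₁ ^ (1 - 2 / α) +
          mixedNorm (ENNReal.ofReal α) (ENNReal.ofReal β) I u₂) := by
  have hWu₁ : Measurable (Function.uncurry fun t x => W x * u₁ t x) := by fun_prop
  have hWu₂ : Measurable (Function.uncurry fun t x => W x * u₂ t x) := by fun_prop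
  have : ENNReal.HolderTriple (ENNReal.ofReal (2 * β / (β - 2))) (ENNReal.ofReal β) 2 := by
    have hβ₂ : 0 < β - 2 := by linarith
    simpa using ENNReal.holderTriple_ofReal (p := 2 * β / (β - 2)) (q := β) (r := 2)
      (by positivity) (by positivity) (by norm_num) (by field_simp; ring)
  have h2α : (2 : ℝ≥0∞) ≤ ENNReal.ofReal α := by simpa using ENNReal.ofReal_le_ofReal hα
  have hsum : (fun t x => W x * (u₁ + u₂) t x) =
      (fun t x => W x * u₁ t x) + fun t x => W x * u₂ t x := by
    ext t x; simp [mul_add]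
  rw [hsum, add_mul, mul_add, mul_add]
  refine (mixedNorm_add_le (one_le_two.trans h2α) one_le_two ENNReal.ofNat_ne_top hWu₁ hWu₂).trans
    (add_le_add ?_ ?_)
  · exact (mixedNorm_mul_le_interpolation hα hWm hW₃ hW hu₁).trans le_self_add
  · exact (mixedNorm_mul_le (q := ENNReal.ofReal β) (ENNReal.ofReal_pos.2 (by linarith)).ne' hWβ
      fun _ => hu₂.of_uncurry_left.aestronglyMeasurable).trans le_add_self

end MixedNorm

/-- interpolation-and-localization: a split `u = u₁ + u₂` with
`u₁ ∈ L²_t L⁶_x ∩ L^∞_t L²_x` and `u₂ ∈ L^α_t L^β_x` yields `|V|^{1/2} u ∈ L^α_t L²_x`,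
behind conclusions (3.19) and (3.25) of the paper. -/
theorem statement12 (V : SchwartzMap R3 ℝ) (α β : ℝ) (hα : 2 ≤ α) (hβ : 2 < β) :
    ∃ C > (0 : ℝ), ∀ u u₁ u₂ : ℝ → R3 → ℂ,
      (∀ t x, u t x = u₁ t x + u₂ t x) →
      Measurable (Function.uncurry u₁) →
      Measurable (Function.uncurry u₂) →
      mixedNorm 2 6 (Ici 0) u₁ < ∞ →
      mixedNorm ∞ 2 (Ici 0) u₁ < ∞ →
      mixedNorm (ENNReal.ofReal α) (ENNReal.ofReal β) (Ici 0) u₂ < ∞ →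
      mixedNorm (ENNReal.ofReal α) 2 (Ici 0)
          (fun t x => ((|V x| ^ ((1 : ℝ) / 2) : ℝ) : ℂ) * u t x)
        ≤ ENNReal.ofReal C *
            ((mixedNorm 2 6 (Ici 0) u₁) ^ (2 / α) * (mixedNorm ∞ 2 (Ici 0) u₁) ^ (1 - 2 / α)
              + mixedNorm (ENNReal.ofReal α) (ENNReal.ofReal β) (Ici 0) u₂)
        ∧ mixedNorm (ENNReal.ofReal α) 2 (Ici 0)
            (fun t x => ((|V x| ^ ((1 : ℝ) / 2) : ℝ) : ℂ) * u t x) < ∞ := by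
  set W : R3 → ℂ := fun x => ((|V x| ^ ((1 : ℝ) / 2) : ℝ) : ℂ)
  have hW (p : ℝ≥0∞) : MemLp W p volume := by
    have h := V.memLp_norm_rpow (s := 1 / 2) (by norm_num) p volume
    simp only [Real.norm_eq_abs] at h
    exact h.ofReal
  set K := eLpNorm W 3 volume ^ (2 / α) * eLpNorm W ∞ volume ^ (1 - 2 / α) +
    eLpNorm W (ENNReal.ofReal (2 * β / (β - 2))) volume
  have h1α : 0 ≤ 1 - 2 / α := by rw [sub_nonneg, div_le_one (by linarith)]; exact hα
  have hK : K ≠ ∞ := by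
    have := (hW 3).2.ne; have := (hW ∞).2.ne; have := (hW (ENNReal.ofReal (2 * β / (β - 2)))).2.ne
    finiteness
  have hKC : K ≤ ENNReal.ofReal (K.toReal + 1) := by
    rw [ENNReal.ofReal_add ENNReal.toReal_nonneg zero_le_one, ENNReal.ofReal_toReal hK]
    exact le_self_add
  refine ⟨K.toReal + 1, by positivity, fun u u₁ u₂ hsplit hu₁ hu₂ hM₁ hM₂ hM₃ => ?_⟩
  obtain rfl : u = u₁ + u₂ := funext₂ hsplit
  have hle := mixedNorm_mul_add_le (I := Ici 0) hα hβ (by fun_prop) (hW 3) (hW ∞) (hW _) hu₁ hu₂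
  refine ⟨hle.trans (by gcongr), hle.trans_lt (ENNReal.mul_lt_top hK.lt_top ?_)⟩
  have := hM₁.ne; have := hM₂.ne; have := hM₃.ne
  finiteness
end
end
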